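/- Let e, i, d be natural numbers and set m̃(e,i,d) := m(e+i+d, i, d), where m(n, i, d) ∈ ℕ ∪ {∞} is the supremum of all m such that R_{m×n} admits an (i,d)-covering. If i ≥ e, then m̃(e,i,d) ≥ d + e + m̃(e, i−e, d); if d ≥ e, then m̃(e,i,d) ≥ i + e + m̃(e, i, d−e). Equivalently: if i ≥ e and R_{m×(e+i+d)} admits an (i−e, d)-covering, then R_{(m+d+e)×(e+i+d)} admits an (i,d)-covering; and symmetrically in the roles of i and d. -/

import Mathlib

/-- A monotonous polyomino in the lattice rectangle `R_{m×n}`, spanning columns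
`r` to `s` (with `1 ≤ r ≤ s ≤ m`), encoded by a monotone function `P` taking
values in `{1,…,n}` on `{r-1,…,s}`. -/
structure MonoPoly (m n : ℕ) where
  r : ℕ
  s : ℕ
  P : ℕ → ℕ
  one_le_r : 1 ≤ r
  r_le_s : r ≤ s
  s_le_m : s ≤ m
  val_mem : ∀ t, r - 1 ≤ t → t ≤ s → 1 ≤ P t ∧ P t ≤ n
  mono : (∀ t u, r - 1 ≤ t → t ≤ u → u ≤ s → P t ≤ P u) ∨
         (∀ t u, r - 1 ≤ t → t ≤ u → u ≤ s → P u ≤ P t)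

/-- The cell set of a monotonous polyomino:
`{(t,j) : r ≤ t ≤ s, min(P(t-1),P(t)) ≤ j ≤ max(P(t-1),P(t))}`. -/
def MonoPoly.cells {m n : ℕ} (Q : MonoPoly m n) : Set (ℕ × ℕ) :=
  {c | Q.r ≤ c.1 ∧ c.1 ≤ Q.s ∧
       min (Q.P (c.1 - 1)) (Q.P c.1) ≤ c.2 ∧
       c.2 ≤ max (Q.P (c.1 - 1)) (Q.P c.1)}

/-- A monotonous polyomino is increasing if its encoding function is
nondecreasing on `{r-1,…,s}`. -/
def MonoPoly.Increasing {m n : ℕ} (Q : MonoPoly m n) : Prop :=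
  ∀ t u, Q.r - 1 ≤ t → t ≤ u → u ≤ Q.s → Q.P t ≤ Q.P u

/-- A monotonous polyomino is decreasing if its encoding function is
nonincreasing on `{r-1,…,s}`. -/
def MonoPoly.Decreasing {m n : ℕ} (Q : MonoPoly m n) : Prop :=
  ∀ t u, Q.r - 1 ≤ t → t ≤ u → u ≤ Q.s → Q.P u ≤ Q.P t

/-- A monotonous polyomino is fully defined on `{0,…,m}` if `r = 1` and `s = m`. -/
def MonoPoly.Full {m n : ℕ} (Q : MonoPoly m n) : Prop :=
  Q.r = 1 ∧ Q.s = m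

/-- `F` is a covering of `R_{m×n}` by `p` monotonous polyominoes: every cell
`(k,l)` with `1 ≤ k ≤ m`, `1 ≤ l ≤ n` belongs to some member of the family. -/
def IsCovering (m n p : ℕ) (F : Fin p → MonoPoly m n) : Prop :=
  ∀ k l : ℕ, 1 ≤ k → k ≤ m → 1 ≤ l → l ≤ n → ∃ a, (k, l) ∈ (F a).cells

/-- An `(i,d)`-covering of `R_{m×n}`: `i` increasing and `d` decreasing
monotonous polyominoes whose cell sets together cover `{1,…,m}×{1,…,n}`. -/
def IsIDCovering (m n i d : ℕ) (F : Fin i → MonoPoly m n)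
    (G : Fin d → MonoPoly m n) : Prop :=
  (∀ a, (F a).Increasing) ∧ (∀ b, (G b).Decreasing) ∧
  ∀ k l : ℕ, 1 ≤ k → k ≤ m → 1 ≤ l → l ≤ n →
    (∃ a, (k, l) ∈ (F a).cells) ∨ (∃ b, (k, l) ∈ (G b).cells)

/-- The minimal number of monotonous polyominoes needed to cover `R_{m×n}`. -/
noncomputable def minCover (m n : ℕ) : ℕ :=
  sInf {p : ℕ | ∃ F : Fin p → MonoPoly m n, IsCovering m n p F}

/-- `m(n,i,d) ∈ ℕ∞`: the supremum of all `m` such that `R_{m×n}` admits an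
`(i,d)`-covering. -/
noncomputable def mSup (n i d : ℕ) : ℕ∞ :=
  ⨆ m ∈ {m : ℕ | ∃ (F : Fin i → MonoPoly m n) (G : Fin d → MonoPoly m n),
      IsIDCovering m n i d F G}, (m : ℕ∞)

/-- `f : ℕ → ℕ` encodes an increasing monotonous polyomino in `R_{m×n}` fully
defined on `{0,…,m}`: values in `{1,…,n}` and nondecreasing on `{0,…,m}`. -/
def IncFull (m n : ℕ) (f : ℕ → ℕ) : Prop :=
  (∀ t, t ≤ m → 1 ≤ f t ∧ f t ≤ n) ∧ (∀ t u, t ≤ u → u ≤ m → f t ≤ f u)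

/-- The cell set of an increasing polyomino fully defined on `{0,…,m}`,
encoded by the nondecreasing function `f`. -/
def cellsFull (m : ℕ) (f : ℕ → ℕ) : Set (ℕ × ℕ) :=
  {c | 1 ≤ c.1 ∧ c.1 ≤ m ∧ f (c.1 - 1) ≤ c.2 ∧ c.2 ≤ f c.1}

/-!
Extend every polyomino to a monotone curve on all columns. Given a `(p, d)`-covering of
height `e + p + d`, sort the increasing curves columnwise (order statistics) and raise the
`j`-th one to height at least `j + 1`; reflected, the same is done for the decreasing curves.
Now prepend `d + e` columns and add `e` rows on top. In the new columns the old increasing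
curves stay at heights `1, …, p`, the decreasing curves form a staircase covering the upper
rows during the first `d` columns, and `e` new increasing curves form a staircase climbing by
`e + d` during the last `e` columns and then stay on the new top rows. The sorted and pinned
curves continue from there. The case `d ≥ e` follows by reflecting the rectangle upside down,
which exchanges increasing and decreasing polyominoes.
-/

open Finset

/-- Polyominoes are extended to monotone functions on all of `ℕ`; column `t + 1` of the
rectangle is covered by the segment of a curve between its values at `t` and `t + 1`. -/
structure IsFullCovering (M n p d : ℕ) (f : Fin p → ℕ → ℕ) (h : Fin d → ℕ → ℕ) : Prop where
  inc_mem : ∀ a t, 1 ≤ f a t ∧ f a t ≤ n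
  dec_mem : ∀ b t, 1 ≤ h b t ∧ h b t ≤ n
  monotone : ∀ a, Monotone (f a)
  antitone : ∀ b, Antitone (h b)
  covers : ∀ t l, t < M → 1 ≤ l → l ≤ n →
    (∃ a, f a t ≤ l ∧ l ≤ f a (t + 1)) ∨ ∃ b, h b (t + 1) ≤ l ∧ l ≤ h b t

def HasFullCovering (M n p d : ℕ) : Prop :=
  ∃ f h, IsFullCovering M n p d f h

namespace MonoPoly

variable {m n : ℕ} (Q : MonoPoly m n)

def extend (t : ℕ) : ℕ :=
  Q.P (max (Q.r - 1) (min t Q.s))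

lemma extend_mem (t : ℕ) : 1 ≤ Q.extend t ∧ Q.extend t ≤ n :=
  Q.val_mem _ (le_max_left _ _) (by have := Q.r_le_s; omega)

lemma extend_of_mem {t : ℕ} (h₁ : Q.r - 1 ≤ t) (h₂ : t ≤ Q.s) : Q.extend t = Q.P t := by
  rw [extend, show max (Q.r - 1) (min t Q.s) = t by omega]

lemma extend_between_of_mem_cells {t l : ℕ} (hc : (t + 1, l) ∈ Q.cells) :
    min (Q.extend t) (Q.extend (t + 1)) ≤ l ∧ l ≤ max (Q.extend t) (Q.extend (t + 1)) := by
  obtain ⟨hr, hs, hmin, hmax⟩ := hc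
  rw [Nat.add_sub_cancel] at hmin hmax
  rw [Q.extend_of_mem (by omega) (by omega), Q.extend_of_mem (by omega) hs]
  exact ⟨hmin, hmax⟩

lemma Increasing.monotone_extend {Q : MonoPoly m n} (hQ : Q.Increasing) :
    Monotone Q.extend := fun t u htu =>
  hQ _ _ (le_max_left _ _) (by omega) (by have := Q.r_le_s; omega)

lemma Decreasing.antitone_extend {Q : MonoPoly m n} (hQ : Q.Decreasing) :
    Antitone Q.extend := fun t u htu =>
  hQ _ _ (le_max_left _ _) (by omega) (by have := Q.r_le_s; omega)

instance : IsEmpty (MonoPoly 0 n) :=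
  ⟨fun Q => by have := Q.one_le_r; have := Q.r_le_s; have := Q.s_le_m; omega⟩

def ofFun {M : ℕ} (hM : 1 ≤ M) (g : ℕ → ℕ) (hg : ∀ t, 1 ≤ g t ∧ g t ≤ n)
    (hmono : Monotone g ∨ Antitone g) : MonoPoly M n :=
  ⟨1, M, g, le_rfl, hM, le_rfl, fun t _ _ => hg t,
    hmono.imp (fun h _ _ _ htu _ => h htu) (fun h _ _ _ htu _ => h htu)⟩

lemma mem_cells_ofFun {M : ℕ} {hM : 1 ≤ M} {g : ℕ → ℕ} {hg : ∀ t, 1 ≤ g t ∧ g t ≤ n}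
    {hmono : Monotone g ∨ Antitone g} {k l : ℕ} :
    (k, l) ∈ (ofFun hM g hg hmono).cells ↔
      1 ≤ k ∧ k ≤ M ∧ min (g (k - 1)) (g k) ≤ l ∧ l ≤ max (g (k - 1)) (g k) :=
  Iff.rfl

end MonoPoly

lemma IsIDCovering.isFullCovering {M n p d : ℕ} {F : Fin p → MonoPoly M n}
    {G : Fin d → MonoPoly M n} (H : IsIDCovering M n p d F G) :
    IsFullCovering M n p d (fun a => (F a).extend) (fun b => (G b).extend) := by
  obtain ⟨hF, hG, hcov⟩ := H
  refine ⟨fun a => (F a).extend_mem, fun b => (G b).extend_mem,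
    fun a => (hF a).monotone_extend, fun b => (hG b).antitone_extend, fun t l ht hl hln => ?_⟩
  refine (hcov (t + 1) l (by omega) (by omega) hl hln).imp ?_ ?_
  · rintro ⟨a, ha⟩
    have := (F a).extend_between_of_mem_cells ha
    have := (hF a).monotone_extend (Nat.le_add_right t 1)
    exact ⟨a, by omega, by omega⟩
  · rintro ⟨b, hb⟩
    have := (G b).extend_between_of_mem_cells hb
    have := (hG b).antitone_extend (Nat.le_add_right t 1)
    exact ⟨b, by omega, by omega⟩

lemma HasFullCovering.exists_isIDCovering {M n p d : ℕ} (hM : 1 ≤ M)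
    (H : HasFullCovering M n p d) : ∃ F G, IsIDCovering M n p d F G := by
  obtain ⟨f, h, H⟩ := H
  refine ⟨fun a => .ofFun hM (f a) (H.inc_mem a) (.inl (H.monotone a)),
    fun b => .ofFun hM (h b) (H.dec_mem b) (.inr (H.antitone b)),
    fun a _ _ _ htu _ => H.monotone a htu, fun b _ _ _ htu _ => H.antitone b htu, ?_⟩
  intro k l hk hkM hl hln
  obtain ⟨t, rfl⟩ : ∃ t, k = t + 1 := ⟨k - 1, by omega⟩
  refine (H.covers t l (by omega) hl hln).imp ?_ ?_
  · rintro ⟨a, h₁, h₂⟩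
    have := H.monotone a (Nat.le_add_right t 1)
    exact ⟨a, MonoPoly.mem_cells_ofFun.2 ⟨hk, hkM, by rw [Nat.add_sub_cancel]; omega⟩⟩
  · rintro ⟨b, h₁, h₂⟩
    have := H.antitone b (Nat.le_add_right t 1)
    exact ⟨b, MonoPoly.mem_cells_ofFun.2 ⟨hk, hkM, by rw [Nat.add_sub_cancel]; omega⟩⟩

theorem exists_isIDCovering_iff {M n p d : ℕ} :
    (∃ F G, IsIDCovering M n p d F G) ↔ HasFullCovering M n p d ∧ (M = 0 → p + d = 0) := by
  constructor
  · rintro ⟨F, G, H⟩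
    refine ⟨⟨_, _, H.isFullCovering⟩, ?_⟩
    rintro rfl
    have hp : p = 0 := Nat.eq_zero_of_not_pos fun hp => isEmptyElim (F ⟨0, hp⟩)
    have hd : d = 0 := Nat.eq_zero_of_not_pos fun hd => isEmptyElim (G ⟨0, hd⟩)
    omega
  · rintro ⟨H, hM⟩
    rcases Nat.eq_zero_or_pos M with rfl | hM
    · obtain ⟨rfl, rfl⟩ : p = 0 ∧ d = 0 := by omega
      exact ⟨finZeroElim, finZeroElim, finZeroElim, finZeroElim, fun k _ hk hk0 => by omega⟩
    · exact H.exists_isIDCovering hM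

namespace IsFullCovering

variable {M n p d : ℕ} {f : Fin p → ℕ → ℕ} {h : Fin d → ℕ → ℕ}

lemma reflect (H : IsFullCovering M n p d f h) :
    IsFullCovering M n d p (fun b t => n + 1 - h b t) (fun a t => n + 1 - f a t) where
  inc_mem b t := by have := H.dec_mem b t; omega
  dec_mem a t := by have := H.inc_mem a t; omega
  monotone b t u htu := by have := H.antitone b htu; dsimp only; omega
  antitone a t u htu := by have := H.monotone a htu; dsimp only; omega
  covers t l ht hl hln := by
    rcases H.covers t (n + 1 - l) ht (by omega) (by omega) with ⟨a, h₁, h₂⟩ | ⟨b, h₁, h₂⟩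
    · have := H.inc_mem a t
      exact .inr ⟨a, by omega, by omega⟩
    · have := H.dec_mem b t
      exact .inl ⟨b, by omega, by omega⟩

lemma clip {N : ℕ} (H : IsFullCovering M N p d f h) (hn : n ≤ N) (hpd : p + d ≤ n) :
    IsFullCovering M n p d (fun a t => min (f a t) n) (fun b t => min (h b t) n) where
  inc_mem a t := by have := H.inc_mem a t; have := a.isLt; omega
  dec_mem b t := by have := H.dec_mem b t; have := b.isLt; omega
  monotone a _ _ htu := min_le_min_right n (H.monotone a htu)
  antitone b _ _ htu := min_le_min_right n (H.antitone b htu)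
  covers t l ht hl hln := (H.covers t l ht hl (by omega)).imp
    (fun ⟨a, h₁, h₂⟩ => ⟨a, by omega, by omega⟩) (fun ⟨b, h₁, h₂⟩ => ⟨b, by omega, by omega⟩)

end IsFullCovering

lemma HasFullCovering.swap {M n p d : ℕ} (H : HasFullCovering M n p d) :
    HasFullCovering M n d p :=
  let ⟨_, _, H⟩ := H
  ⟨_, _, H.reflect⟩

lemma hasFullCovering_one {n p d : ℕ} (hn : 1 ≤ n) (hp : 0 < p) : HasFullCovering 1 n p d :=
  ⟨fun _ t => if t = 0 then 1 else n, fun _ _ => 1,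
    fun _ t => by split_ifs <;> omega, fun _ _ => ⟨le_rfl, hn⟩,
    fun _ t u htu => by split_ifs <;> omega, fun _ _ _ _ => le_rfl,
    fun t l ht _ hln => .inl ⟨⟨0, hp⟩, by rw [if_pos (by omega)]; omega,
      by rw [if_neg (by omega)]; exact hln⟩⟩

theorem exists_isIDCovering_comm {M n p d : ℕ} :
    (∃ F G, IsIDCovering M n p d F G) ↔ ∃ F G, IsIDCovering M n d p F G := by
  simp only [exists_isIDCovering_iff, add_comm p d]
  exact ⟨.imp_left HasFullCovering.swap, .imp_left HasFullCovering.swap⟩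

theorem mSup_comm (n p d : ℕ) : mSup n p d = mSup n d p := by
  simp only [mSup, exists_isIDCovering_comm]

theorem exists_isIDCovering_of_height_le {m n N p d : ℕ} (hn : n ≤ N) (hpd : p + d ≤ n)
    (H : ∃ F G, IsIDCovering m N p d F G) : ∃ F G, IsIDCovering m n p d F G := by
  obtain ⟨⟨f, h, H⟩, hm⟩ := exists_isIDCovering_iff.1 H
  exact exists_isIDCovering_iff.2 ⟨⟨_, _, H.clip hn hpd⟩, hm⟩

theorem nonempty_isIDCovering_widths {n p d : ℕ} (hpd : p + d ≤ n) :
    {m | ∃ F G, IsIDCovering m n p d F G}.Nonempty := by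
  rcases Nat.eq_zero_or_pos p with rfl | hp
  · rcases Nat.eq_zero_or_pos d with rfl | hd
    · exact ⟨0, finZeroElim, finZeroElim, finZeroElim, finZeroElim, fun k _ hk hk0 => by omega⟩
    · exact ⟨1, exists_isIDCovering_comm.1 <|
        exists_isIDCovering_iff.2 ⟨hasFullCovering_one (by omega) hd, by omega⟩⟩
  · exact ⟨1, exists_isIDCovering_iff.2 ⟨hasFullCovering_one (by omega) hp, by omega⟩⟩

section Sorting

variable {p n : ℕ} (f : Fin p → ℕ → ℕ)

def countLE (t x : ℕ) : ℕ := #{a | f a t ≤ x}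

/-- The `j`-th smallest (from `0`) of the values `f a t`, raised to at least `j + 1`. -/
noncomputable def sortedCurve (j t : ℕ) : ℕ := sInf {x | j < x ∧ j < countLE f t x}

variable {f}

lemma countLE_eq_of_le {t x : ℕ} (hx : ∀ a, f a t ≤ x) : countLE f t x = p := by
  simp [countLE, Finset.filter_true_of_mem fun a _ => hx a]

lemma countLE_le_of_le {t t' x : ℕ} (htt' : ∀ a, f a t ≤ f a t') :
    countLE f t' x ≤ countLE f t x :=
  card_le_card fun a ha => by
    simp only [mem_filter, mem_univ, true_and] at ha ⊢
    exact (htt' a).trans ha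

variable (hf : ∀ a t, f a t ≤ n)
include hf

lemma sortedCurve_spec {j : ℕ} (t : ℕ) (hjp : j < p) (hjn : j < n) :
    j < sortedCurve f j t ∧ j < countLE f t (sortedCurve f j t) :=
  Nat.sInf_mem (s := {x | j < x ∧ j < countLE f t x})
    ⟨n, hjn, by rwa [countLE_eq_of_le fun a => hf a t]⟩

lemma sortedCurve_le {j t : ℕ} (hjp : j < p) (hjn : j < n) : sortedCurve f j t ≤ n :=
  Nat.sInf_le ⟨hjn, by rwa [countLE_eq_of_le fun a => hf a t]⟩

lemma monotone_sortedCurve (hmono : ∀ a, Monotone (f a)) {j : ℕ} (hjp : j < p) (hjn : j < n) :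
    Monotone (sortedCurve f j) := fun _ t' htt' =>
  have hs := sortedCurve_spec hf t' hjp hjn
  Nat.sInf_le ⟨hs.1, hs.2.trans_le (countLE_le_of_le fun a => hmono a htt')⟩

lemma exists_sortedCurve_covers (hmono : ∀ a, Monotone (f a)) {a : Fin p} {t l : ℕ}
    (h₁ : f a t ≤ l) (h₂ : l ≤ f a (t + 1)) (hl : 1 ≤ l) :
    ∃ j < p, sortedCurve f j t ≤ l ∧ l ≤ sortedCurve f j (t + 1) := by
  set c := countLE f t l
  have hac : a ∈ ({a | f a t ≤ l} : Finset _) := by simpa using h₁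
  have hc : 0 < c := card_pos.2 ⟨a, hac⟩
  have hcp : c ≤ p := (card_le_univ _).trans (Fintype.card_fin p).le
  refine ⟨min c l - 1, by omega, Nat.sInf_le ⟨by omega, by omega⟩, ?_⟩
  by_contra! hx
  obtain ⟨hjx, hjc⟩ := sortedCurve_spec hf (t + 1) (j := min c l - 1) (by omega)
    (by have := hf a (t + 1); omega)
  have hlt : countLE f (t + 1) (sortedCurve f (min c l - 1) (t + 1)) < c := by
    refine card_lt_card ((ssubset_iff_of_subset fun b hb => ?_).2 ⟨a, hac, ?_⟩)
    · have := hmono b (Nat.le_add_right t 1)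
      simp only [mem_filter, mem_univ, true_and] at hb ⊢
      omega
    · simp only [mem_filter, mem_univ, true_and]
      omega
  omega

end Sorting

namespace IsFullCovering

variable {M n p d : ℕ} {f : Fin p → ℕ → ℕ} {h : Fin d → ℕ → ℕ}

lemma exists_incPinned (H : IsFullCovering M n p d f h) (hp : p ≤ n) :
    ∃ f', IsFullCovering M n p d f' h ∧ ∀ (j : Fin p) t, (j : ℕ) < f' j t := by
  have hf a t := (H.inc_mem a t).2
  refine ⟨fun j => sortedCurve f j, ⟨fun j t => ?_, H.dec_mem,
    fun j => monotone_sortedCurve hf H.monotone j.isLt (by omega), H.antitone,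
    fun t l ht hl hln => ?_⟩, fun j t => (sortedCurve_spec hf t j.isLt (by omega)).1⟩
  · exact ⟨by have := (sortedCurve_spec hf t j.isLt (by omega)).1; omega,
      sortedCurve_le hf j.isLt (by omega)⟩
  · refine (H.covers t l ht hl hln).imp_left fun ⟨a, h₁, h₂⟩ => ?_
    obtain ⟨j, hj, hjl⟩ := exists_sortedCurve_covers hf H.monotone h₁ h₂ hl
    exact ⟨⟨j, hj⟩, hjl⟩

lemma exists_pinned (H : IsFullCovering M n p d f h) (hp : p ≤ n) (hd : d ≤ n) :
    ∃ f' h', IsFullCovering M n p d f' h' ∧ (∀ (j : Fin p) t, (j : ℕ) < f' j t) ∧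
      ∀ (k : Fin d) t, h' k t + k ≤ n := by
  obtain ⟨f₁, H₁, hf₁⟩ := H.exists_incPinned hp
  obtain ⟨g, H₂, hg⟩ := H₁.reflect.exists_incPinned hd
  refine ⟨_, _, H₂.reflect, fun j t => ?_, fun k t => ?_⟩
  · have := hf₁ j t; have := (H₁.inc_mem j t).2; omega
  · have := hg k t; have := (H₂.inc_mem k t).2; omega

lemma append_top (H : IsFullCovering M n p d f h) (e : ℕ) :
    IsFullCovering M (n + e) (p + e) d (Fin.append f fun c _ => n + c + 1) h where
  inc_mem a t := by
    refine Fin.addCases (fun j => ?_) (fun c => ?_) a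
    · have := H.inc_mem j t; simp only [Fin.append_left]; omega
    · simp only [Fin.append_right]; omega
  dec_mem b t := by have := H.dec_mem b t; omega
  monotone a := by
    refine Fin.addCases (fun j => ?_) (fun c => ?_) a
    · simpa only [Fin.append_left] using H.monotone j
    · simpa only [Fin.append_right] using monotone_const
  antitone := H.antitone
  covers t l ht hl hln := by
    by_cases hl' : l ≤ n
    · exact (H.covers t l ht hl hl').imp_left fun ⟨a, ha⟩ =>
        ⟨Fin.castAdd e a, by simpa only [Fin.append_left] using ha⟩
    · exact .inl ⟨Fin.natAdd p ⟨l - n - 1, by omega⟩, by simp only [Fin.append_right]; omega⟩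

end IsFullCovering

/-- The `c`-th of `w` staircase curves: at height `c + 1`, it jumps by `J` at column `w - c`,
so that together the curves cover `R_{w × (w + J)}`. -/
def cascade (w J c t : ℕ) : ℕ := if t + c < w then c + 1 else c + 1 + J

lemma monotone_cascade (w J c : ℕ) : Monotone (cascade w J c) :=
  monotone_nat_of_le_succ fun t => by unfold cascade; split_ifs <;> omega

lemma exists_cascade_covers {w J t l : ℕ} (ht : t < w) (hl : 1 ≤ l) (hlw : l ≤ w + J) :
    ∃ c < w, cascade w J c t ≤ l ∧ l ≤ cascade w J c (t + 1) := by
  unfold cascade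
  by_cases h₁ : t + l < w
  · exact ⟨l - 1, by omega, by split_ifs <;> omega, by split_ifs <;> omega⟩
  by_cases h₂ : l ≤ w - t + J
  · exact ⟨w - t - 1, by omega, by split_ifs <;> omega, by split_ifs <;> omega⟩
  · exact ⟨l - J - 1, by omega, by split_ifs <;> omega, by split_ifs <;> omega⟩

lemma monotone_piecewise {α : Type*} [Preorder α] {g₁ g₂ : ℕ → α} {M : ℕ}
    (h₁ : Monotone g₁) (h₂ : Monotone g₂) (h : g₁ M ≤ g₂ 0) :
    Monotone fun t => if t ≤ M then g₁ t else g₂ (t - M) := by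
  refine monotone_nat_of_le_succ fun t => ?_
  split_ifs with ht ht'
  · exact h₁ t.le_succ
  · exact (h₁ (by omega : t ≤ M)).trans (h.trans (h₂ (Nat.zero_le _)))
  · omega
  · exact h₂ (by omega)

namespace IsFullCovering

variable {M₁ M₂ n p d : ℕ} {f₁ f₂ : Fin p → ℕ → ℕ} {h₁ h₂ : Fin d → ℕ → ℕ}

lemma append (H₁ : IsFullCovering M₁ n p d f₁ h₁) (H₂ : IsFullCovering M₂ n p d f₂ h₂)
    (hf : ∀ a, f₁ a M₁ ≤ f₂ a 0) (hh : ∀ b, h₂ b 0 ≤ h₁ b M₁) :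
    IsFullCovering (M₁ + M₂) n p d (fun a t => if t ≤ M₁ then f₁ a t else f₂ a (t - M₁))
      (fun b t => if t ≤ M₁ then h₁ b t else h₂ b (t - M₁)) where
  inc_mem a t := by split_ifs; exacts [H₁.inc_mem a t, H₂.inc_mem a _]
  dec_mem b t := by split_ifs; exacts [H₁.dec_mem b t, H₂.dec_mem b _]
  monotone a := monotone_piecewise (H₁.monotone a) (H₂.monotone a) (hf a)
  antitone b := monotone_piecewise (α := ℕᵒᵈ) (H₁.antitone b) (H₂.antitone b) (hh b)
  covers t l ht hl hln := by
    by_cases htM : t < M₁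
    · simp only [if_pos htM.le, if_pos (Nat.succ_le_of_lt htM)]
      exact H₁.covers t l htM hl hln
    have hshift : t + 1 - M₁ = t - M₁ + 1 := by omega
    simp only [if_neg (by omega : ¬ t + 1 ≤ M₁), hshift]
    refine (H₂.covers (t - M₁) l (by omega) hl hln).imp ?_ ?_
    · rintro ⟨a, ha₁, ha₂⟩
      refine ⟨a, ?_, ha₂⟩
      split_ifs
      · rw [show t = M₁ by omega]; exact (hf a).trans ((H₂.monotone a (Nat.zero_le _)).trans ha₁)
      · exact ha₁
    · rintro ⟨b, hb₁, hb₂⟩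
      refine ⟨b, hb₁, ?_⟩
      split_ifs
      · rw [show t = M₁ by omega]; exact (hb₂.trans (H₂.antitone b (Nat.zero_le _))).trans (hh b)
      · exact hb₂

end IsFullCovering

lemma isFullCovering_leftBlock (p e d : ℕ) :
    IsFullCovering (d + e) (e + p + d + e) (p + e) d
      (Fin.append (fun j _ => j + 1) fun c t => p + cascade e (e + d) c (t - d))
      (fun k t => e + p + d + e + 1 - cascade d e k t) where
  inc_mem a t := by
    refine Fin.addCases (fun j => ?_) (fun c => ?_) a
    · simp only [Fin.append_left]; omega
    · simp only [Fin.append_right, cascade]; split_ifs <;> omega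
  dec_mem k t := by have := k.isLt; simp only [cascade]; split_ifs <;> omega
  monotone a := by
    refine Fin.addCases (fun j => ?_) (fun c => ?_) a
    · simpa only [Fin.append_left] using monotone_const
    · simp only [Fin.append_right]
      exact fun t u htu =>
        Nat.add_le_add_left (monotone_cascade _ _ _ (Nat.sub_le_sub_right htu d)) p
  antitone k t u htu := by have := monotone_cascade d e k htu; dsimp only; omega
  covers t l ht hl hln := by
    by_cases hlp : l ≤ p
    · exact .inl ⟨Fin.castAdd e ⟨l - 1, by omega⟩, by simp only [Fin.append_left]; omega⟩
    by_cases htd : t < d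
    · by_cases hle : l ≤ p + e
      · refine .inl ⟨Fin.natAdd p ⟨l - p - 1, by omega⟩, ?_⟩
        simp only [Fin.append_right, cascade]
        split_ifs <;> omega
      · obtain ⟨k, hk, hk₁, hk₂⟩ :=
          exists_cascade_covers (J := e) (l := e + p + d + e + 1 - l) htd (by omega) (by omega)
        exact .inr ⟨⟨k, hk⟩, by dsimp only; omega, by dsimp only; omega⟩
    · obtain ⟨c, hc, hc₁, hc₂⟩ :=
        exists_cascade_covers (w := e) (J := e + d) (t := t - d) (l := l - p)
          (by omega) (by omega) (by omega)
      refine .inl ⟨Fin.natAdd p ⟨c, hc⟩, ?_⟩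
      simp only [Fin.append_right, show t + 1 - d = t - d + 1 by omega]
      omega

theorem HasFullCovering.widen {m e p d : ℕ} (H : HasFullCovering m (e + p + d) p d) :
    HasFullCovering (m + d + e) (e + (p + e) + d) (p + e) d := by
  obtain ⟨f, h, H⟩ := H
  obtain ⟨f, h, H, hf, hh⟩ := H.exists_pinned (by omega) (by omega)
  rw [show m + d + e = d + e + m by omega, show e + (p + e) + d = e + p + d + e by omega]
  refine ⟨_, _, (isFullCovering_leftBlock p e d).append (H.append_top e) (fun a => ?_)
    (fun k => ?_)⟩
  · refine Fin.addCases (fun j => ?_) (fun c => ?_) a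
    · simp only [Fin.append_left]
      exact hf j 0
    · simp only [Fin.append_right, cascade]; split_ifs <;> omega
  · have := hh k 0
    simp only [cascade]; split_ifs <;> omega

theorem exists_isIDCovering_widen {m e p d : ℕ}
    (H : ∃ F G, IsIDCovering m (e + p + d) p d F G) :
    ∃ F G, IsIDCovering (m + d + e) (e + (p + e) + d) (p + e) d F G := by
  obtain ⟨H, hm⟩ := exists_isIDCovering_iff.1 H
  exact exists_isIDCovering_iff.2 ⟨H.widen, by omega⟩

theorem mSup_widen (e p d : ℕ) :
    (d : ℕ∞) + e + mSup (e + p + d) p d ≤ mSup (e + (p + e) + d) (p + e) d := by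
  rw [mSup, mSup, ← Nat.cast_add, ENat.add_biSup (nonempty_isIDCovering_widths (by omega))]
  refine iSup₂_le fun m hm => le_iSup₂_of_le (m + d + e) (exists_isIDCovering_widen hm) ?_
  push_cast
  exact le_of_eq (by ring)

/-- With `m̃(e,i,d) := m(e+i+d, i, d)` (supremum in `ℕ∞` of widths admitting an
`(i,d)`-covering of height `e+i+d`): if `i ≥ e` then
`m̃(e,i,d) ≥ d + e + m̃(e,i-e,d)`; if `d ≥ e` then
`m̃(e,i,d) ≥ i + e + m̃(e,i,d-e)`.  Equivalently, coverings of the smaller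
rectangles extend to coverings of the larger ones. -/
theorem stmt13 (e i d : ℕ) :
    ((e ≤ i → (d : ℕ∞) + (e : ℕ∞) + mSup (e + (i - e) + d) (i - e) d ≤
        mSup (e + i + d) i d) ∧
     (e ≤ d → (i : ℕ∞) + (e : ℕ∞) + mSup (e + i + (d - e)) i (d - e) ≤
        mSup (e + i + d) i d)) ∧
    ((∀ m : ℕ, e ≤ i →
        (∃ (F : Fin (i - e) → MonoPoly m (e + i + d))
           (G : Fin d → MonoPoly m (e + i + d)),
          IsIDCovering m (e + i + d) (i - e) d F G) →
        ∃ (F : Fin i → MonoPoly (m + d + e) (e + i + d))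
          (G : Fin d → MonoPoly (m + d + e) (e + i + d)),
          IsIDCovering (m + d + e) (e + i + d) i d F G) ∧
     (∀ m : ℕ, e ≤ d →
        (∃ (F : Fin i → MonoPoly m (e + i + d))
           (G : Fin (d - e) → MonoPoly m (e + i + d)),
          IsIDCovering m (e + i + d) i (d - e) F G) →
        ∃ (F : Fin i → MonoPoly (m + i + e) (e + i + d))
          (G : Fin d → MonoPoly (m + i + e) (e + i + d)),
          IsIDCovering (m + i + e) (e + i + d) i d F G)) := by
  refine ⟨⟨fun hei => ?_, fun hed => ?_⟩, fun m hei H => ?_, fun m hed H => ?_⟩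
  · obtain ⟨p, rfl⟩ := Nat.exists_eq_add_of_le' hei
    simpa only [Nat.add_sub_cancel] using mSup_widen e p d
  · obtain ⟨q, rfl⟩ := Nat.exists_eq_add_of_le' hed
    rw [Nat.add_sub_cancel, mSup_comm _ i q, mSup_comm _ i (q + e),
      show e + i + q = e + q + i by omega, show e + i + (q + e) = e + (q + e) + i by omega]
    exact mSup_widen e q i
  · obtain ⟨p, rfl⟩ := Nat.exists_eq_add_of_le' hei
    rw [Nat.add_sub_cancel] at H
    exact exists_isIDCovering_widen (exists_isIDCovering_of_height_le (by omega) (by omega) H)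
  · obtain ⟨q, rfl⟩ := Nat.exists_eq_add_of_le' hed
    rw [Nat.add_sub_cancel, exists_isIDCovering_comm] at H
    rw [exists_isIDCovering_comm, show e + i + (q + e) = e + (q + e) + i by omega]
    rw [show e + i + (q + e) = e + (q + e) + i by omega] at H
    exact exists_isIDCovering_widen (exists_isIDCovering_of_height_le (by omega) (by omega) H)
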